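/- Let 0 < p < 1, μ > 0, and let d be a real number with d > 1. The function r ↦ (d − 1)(1 − ((1 − p)(r/μ)/((1 − p)(r/μ) + p))^r) (real power) is strictly monotone increasing on (0, ∞). -/

import Mathlib

/-!
With `c = p μ / (1 - p)` the base of the power is `r / (r + c)`, so it suffices that
`r ↦ (r / (r + c)) ^ r = exp (r log (r / (r + c)))` is strictly decreasing. The exponent has
derivative `log (r / (r + c)) + c / (r + c) = log (1 - t) + t` with `t = c / (r + c) ∈ (0, 1)`,
which is negative because `log x < x - 1` for `x ≠ 1`.
-/

open Real Set

lemma div_mul_div_add_eq_div_add {p μ : ℝ} (hp : p ≠ 1) (hμ : μ ≠ 0) (r : ℝ) :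
    (1 - p) * (r / μ) / ((1 - p) * (r / μ) + p) = r / (r + p * μ / (1 - p)) := by
  have h1p : 1 - p ≠ 0 := sub_ne_zero.2 hp.symm
  have hden : r + p * μ / (1 - p) = μ / (1 - p) * ((1 - p) * (r / μ) + p) := by
    field_simp
  rw [hden, ← div_div]
  congr 1
  field_simp

lemma log_div_add_lt_neg_div {r c : ℝ} (hr : 0 < r) (hc : 0 < c) :
    log (r / (r + c)) < -(c / (r + c)) := by
  have hrc : 0 < r + c := by linarith
  have hlt : r / (r + c) < 1 := (div_lt_one hrc).2 (by linarith)
  calc log (r / (r + c)) < r / (r + c) - 1 := log_lt_sub_one_of_pos (by positivity) hlt.ne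
    _ = -(c / (r + c)) := by field_simp; ring

lemma hasDerivAt_mul_log_div_add {r c : ℝ} (hr : 0 < r) (hc : 0 < c) :
    HasDerivAt (fun x => x * log (x / (x + c))) (log (r / (r + c)) + c / (r + c)) r := by
  have hrc : 0 < r + c := by linarith
  have hquot : HasDerivAt (fun x => x / (x + c)) (c / (r + c) ^ 2) r :=
    ((hasDerivAt_id' r).div ((hasDerivAt_id' r).add_const c) hrc.ne').congr_deriv (by ring)
  refine ((hasDerivAt_id' r).mul (hquot.log (by positivity))).congr_deriv ?_
  field_simp

lemma strictAntiOn_mul_log_div_add {c : ℝ} (hc : 0 < c) :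
    StrictAntiOn (fun x => x * log (x / (x + c))) (Ioi 0) := by
  refine strictAntiOn_of_hasDerivWithinAt_neg (convex_Ioi 0)
    (f' := fun x => log (x / (x + c)) + c / (x + c))
    (fun x hx => (hasDerivAt_mul_log_div_add hx hc).continuousAt.continuousWithinAt) ?_ ?_ <;>
    rw [interior_Ioi]
  · exact fun x hx => (hasDerivAt_mul_log_div_add hx hc).hasDerivWithinAt
  · intro x hx
    linarith [log_div_add_lt_neg_div hx hc]

lemma strictAntiOn_div_add_rpow_self {c : ℝ} (hc : 0 < c) :
    StrictAntiOn (fun x => (x / (x + c)) ^ x) (Ioi 0) := by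
  intro a ha b hb hab
  have hpos : ∀ x ∈ Ioi (0 : ℝ), 0 < x / (x + c) := fun x (hx : 0 < x) => by positivity
  simp only
  rw [rpow_def_of_pos (hpos a ha), rpow_def_of_pos (hpos b hb), mul_comm, mul_comm (log _)]
  exact exp_lt_exp.2 (strictAntiOn_mul_log_div_add hc ha hb hab)

/-- For `0 < p < 1`, `μ > 0` and `d > 1`, the function
`r ↦ (d − 1)(1 − ((1 − p)(r/μ)/((1 − p)(r/μ) + p))^r)` (real power) is strictly
monotone increasing on `(0, ∞)`. -/
theorem stmt_15 (p μ d : ℝ) (hp0 : 0 < p) (hp1 : p < 1) (hμ : 0 < μ) (hd : 1 < d) :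
    StrictMonoOn
      (fun r : ℝ => (d - 1) * (1 - ((1 - p) * (r / μ) / ((1 - p) * (r / μ) + p)) ^ r))
      (Set.Ioi (0 : ℝ)) := by
  have hc : 0 < p * μ / (1 - p) := div_pos (mul_pos hp0 hμ) (sub_pos.2 hp1)
  intro a ha b hb hab
  simp only [div_mul_div_add_eq_div_add hp1.ne hμ.ne']
  exact mul_lt_mul_of_pos_left (sub_lt_sub_left (strictAntiOn_div_add_rpow_self hc ha hb hab) 1)
    (sub_pos.2 hd)
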